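/- Let Γ be a colored tree with principal subtrees Γ_1, …, Γ_m. For each i let r_i be the number of one-dimensional faces of the cone C(Γ_i) if Γ_i is non-trivial, and set r_i = 0 if Γ_i is trivial. Then the number of one-dimensional faces of the cone C(Γ) equals (r_1 + 1)(r_2 + 1)⋯(r_m + 1). -/

import Mathlib

noncomputable section
open Classical

/-- A rose tree whose leaves ("colored vertices") carry labels of type `α` and whose
internal vertices ("uncolored vertices") are unlabelled. -/
inductive CTree (α : Type) : Type
  | leaf (a : α) : CTree α
  | node (ts : List (CTree α)) : CTree α

namespace CTree

variable {α : Type}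

/-- The subtree of `t` at a position `p` (a list of child indices), if it exists. -/
def sub : CTree α → List ℕ → Option (CTree α)
  | t, [] => some t
  | leaf _, _ :: _ => none
  | node ts, i :: p =>
      match ts[i]? with
      | some c => sub c p
      | none => none

/-- All lists of natural numbers of length at most `k` with entries `< m`. -/
def allLists (m : ℕ) : ℕ → List (List ℕ)
  | 0 => [[]]
  | k + 1 => [] :: (List.range m).flatMap (fun i => (allLists m k).map (i :: ·))

/-- The finite set of positions of vertices of `t`. -/
def vertS (t : CTree α) : Finset (List ℕ) :=
  (allLists (sizeOf t) (sizeOf t)).toFinset.filter (fun p => (t.sub p).isSome)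

/-- The finite set of positions of uncolored (internal) vertices of `t`. -/
def uncS (t : CTree α) : Finset (List ℕ) :=
  (allLists (sizeOf t) (sizeOf t)).toFinset.filter (fun p => ∃ ts, t.sub p = some (node ts))

/-- The finite set of positions of colored vertices (leaves) of `t`. -/
def colS (t : CTree α) : Finset (List ℕ) :=
  (allLists (sizeOf t) (sizeOf t)).toFinset.filter (fun p => ∃ a, t.sub p = some (leaf a))

/-- Edges of `t` are identified with the positions of non-root vertices (an edge joins
the vertex at `p ≠ []` to its parent at `p.dropLast`). -/
def edgeS (t : CTree α) : Finset (List ℕ) := (vertS t).erase []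

/-- `t` is a colored tree: every internal vertex has at least one child (so the leaves,
i.e. the childless vertices, are exactly the colored vertices) and the root is
uncolored. -/
def IsColoredTree (t : CTree α) : Prop :=
  (∀ p, t.sub p ≠ some (node ([] : List (CTree α)))) ∧ ∃ ts, t = node ts

/-- The weight `w_d ∈ M` of an edge `d`: the sum of the dual basis vectors `e_u^*`
over uncolored vertices `u` that are descendants of the upper endpoint of `d` but not
descendants of the lower endpoint of `d`. -/
def wt (t : CTree α) (d : List ℕ) : List ℕ → ℤ := fun u =>
  if u ∈ uncS t ∧ d.dropLast <+: u ∧ ¬ d <+: u then 1 else 0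

/-- `s_v ∈ M` : the sum of `e_u^*` over the uncolored descendants `u` of `v`;
`s(Γ) = sv t []`. -/
def sv (t : CTree α) (v : List ℕ) : List ℕ → ℤ := fun u =>
  if u ∈ uncS t ∧ v <+: u then 1 else 0

/-- The pairing between `M = Hom(ℤ^g, ℤ)` and `ℤ^g` (both realized as integer-valued
functions on the uncolored vertices of `t`). -/
def pairZ (t : CTree α) (μ x : List ℕ → ℤ) : ℤ := ∑ p ∈ uncS t, μ p * x p

/-- The pairing between `M` and `ℝ^g`. -/
def pairR (t : CTree α) (μ : List ℕ → ℤ) (x : List ℕ → ℝ) : ℝ :=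
  ∑ p ∈ uncS t, (μ p : ℝ) * x p

/-- The multiset of edges of the (downward) path from the vertex `v` to the vertex `c`;
each edge occurs with multiplicity one. -/
def pathEdges (t : CTree α) (v c : List ℕ) : Multiset (List ℕ) :=
  ((edgeS t).filter (fun d => v <+: d ∧ d ≠ v ∧ d <+: c)).val

/-- The relation `A ∼ B` on multisets of edges: `A` and `B` consist exactly of the edges
of two non-self-crossing paths from a common vertex to two colored vertices. -/
def Sim (t : CTree α) (A B : Multiset (List ℕ)) : Prop :=
  ∃ v ∈ vertS t, ∃ c₁ ∈ colS t, ∃ c₂ ∈ colS t, v <+: c₁ ∧ v <+: c₂ ∧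
    A = pathEdges t v c₁ ∧ B = pathEdges t v c₂

/-- `Y` is a minimally complete subset of the set of edges of `t`: every
(non-self-crossing) path from the root to a colored vertex contains exactly one edge
of `Y`. -/
def MinComplete (t : CTree α) (Y : Finset (List ℕ)) : Prop :=
  Y ⊆ edgeS t ∧ ∀ c ∈ colS t, ∃! d, d ∈ Y ∧ d <+: c

/-- The finite set of minimally complete subsets of the edge set of `t`. -/
def MCfin (t : CTree α) : Finset (Finset (List ℕ)) :=
  (edgeS t).powerset.filter (fun Y => MinComplete t Y)

/-- The dual cone `C(Γ) = {x ∈ ℝ^g | ⟨w_d, x⟩ ≥ 0 for all edges d}`. -/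
def dualCone (t : CTree α) : Set (List ℕ → ℝ) :=
  {x | (∀ p, p ∉ uncS t → x p = 0) ∧ ∀ d ∈ edgeS t, 0 ≤ pairR t (wt t d) x}

/-- The ray spanned by a vector `v`. -/
def ray (v : List ℕ → ℝ) : Set (List ℕ → ℝ) := {x | ∃ c : ℝ, 0 ≤ c ∧ x = c • v}

/-- `F` is a one-dimensional face (extreme ray) of the convex cone `C`. -/
def IsOneDimFace (C F : Set (List ℕ → ℝ)) : Prop :=
  F ⊆ C ∧ (∃ v, v ≠ 0 ∧ F = ray v) ∧
    ∀ x ∈ C, ∀ y ∈ C, x + y ∈ F → x ∈ F ∧ y ∈ F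

/-- The convex cone generated by a set `G ⊆ ℤ^g` inside `ℝ^g`: all finite nonnegative
real combinations of elements of `G`. -/
def coneHull (G : Set (List ℕ → ℤ)) : Set (List ℕ → ℝ) :=
  {x | ∃ (F : Finset (List ℕ → ℤ)) (c : (List ℕ → ℤ) → ℝ),
    ↑F ⊆ G ∧ (∀ v ∈ F, 0 ≤ c v) ∧
    x = ∑ v ∈ F, c v • (fun p => ((v p : ℤ) : ℝ))}

/-- `e_{v_0} ∈ ℤ^g`: the basis vector of the root vertex. -/
def e0 : List ℕ → ℤ := fun p => if p = [] then 1 else 0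

/-- The inclusion `ℤ^{g_i} → ℤ^g` corresponding to the `i`-th principal subtree. -/
def shift (i : ℕ) (f : List ℕ → ℤ) : List ℕ → ℤ := fun p =>
  match p with
  | [] => 0
  | j :: q => if j = i then f q else 0

def isNodeB : CTree α → Bool
  | leaf _ => false
  | node _ => true

/-- The recursively defined set `G(Γ) ⊆ ℤ^g`: `G(Γ)` consists of all vectors
`e_{v₀} + ∑_{i ∈ J} (w_i - e_{v₀})` where `J` ranges over subsets of the set of indices
of non-trivial principal subtrees and `w_i ∈ G(Γ_i)` (in particular if `g = 1` this is
just `{e_{v₀}}`). -/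
def Gset : CTree α → Set (List ℕ → ℤ)
  | leaf _ => ∅
  | node ts =>
      {v | ∃ (J : Finset (Fin ts.length)) (w : Fin ts.length → (List ℕ → ℤ)),
        (∀ i ∈ J, (ts.get i).isNodeB = true ∧ w i ∈ Gset (ts.get i)) ∧
        v = e0 + ∑ i ∈ J, (shift i.1 (w i) - e0)}
  termination_by t => sizeOf t
  decreasing_by
    have h1 : ts.get i ∈ ts := List.get_mem ts i
    have h2 := List.sizeOf_lt_of_mem h1
    simp only [CTree.node.sizeOf_spec]
    omega

/-- Transport of a set of edges of `Γ` to the `i`-th principal subtree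
(`Y ∩ E(Γ_i)`, rewritten in the coordinates of `Γ_i`). -/
def sect (i : ℕ) (Y : Finset (List ℕ)) : Finset (List ℕ) :=
  (Y.filter (fun p => p.head? = some i)).image List.tail

/-- The recursively defined vector `v_Y ∈ ℤ^g` attached to a (minimally complete) set
of edges `Y`: `v_Y = e_{v₀} + ∑_{i ∈ I} (v_{Y_i} - e_{v₀})` where
`I = {i | d_i ∉ Y}` and `Y_i = Y ∩ E(Γ_i)` (if `g = 1` this is just `e_{v₀}`). -/
def vY : CTree α → Finset (List ℕ) → (List ℕ → ℤ)
  | leaf _, _ => 0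
  | node ts, Y =>
      e0 + ∑ i ∈ Finset.univ.filter (fun i : Fin ts.length => [i.1] ∉ Y),
        (shift i.1 (vY (ts.get i) (sect i.1 Y)) - e0)
  termination_by t => sizeOf t
  decreasing_by
    have h1 : ts.get i ∈ ts := List.get_mem ts i
    have h2 := List.sizeOf_lt_of_mem h1
    simp only [CTree.node.sizeOf_spec]
    omega

/-- The set of balanced labellings `X(Γ) ⊆ ℂ^{E(Γ)}`. -/
def Xbal (t : CTree α) : Set (List ℕ → ℂ) :=
  {x | ∀ v ∈ uncS t, ∀ c ∈ colS t, ∀ c' ∈ colS t, v <+: c → v <+: c' →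
    ((pathEdges t v c).map x).prod = ((pathEdges t v c').map x).prod}

/-- `Y ⊆ E(Γ)` is complete: for every finite multiset `A` of edges, the monomial
`∏_{d ∈ A} x_d` vanishes identically on `{x ∈ X(Γ) | x_y = 0 ∀ y ∈ Y}` if and only if
`A` contains at least one edge belonging to `Y`. -/
def CompleteSet (t : CTree α) (Y : Finset (List ℕ)) : Prop :=
  ∀ A : Multiset (List ℕ), (∀ d ∈ A, d ∈ edgeS t) →
    ((∀ x ∈ Xbal t, (∀ y ∈ Y, x y = 0) → (A.map x).prod = 0) ↔ ∃ d ∈ A, d ∈ Y)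

/-- A partition of a type `I`: a finite collection of nonempty pairwise disjoint
subsets covering `I`. -/
def IsPart {I : Type} (P : Finset (Finset I)) : Prop :=
  (∀ S ∈ P, S ≠ ∅) ∧ ∀ a : I, ∃! S, S ∈ P ∧ a ∈ S

/-- The tree with a single uncolored vertex whose children are the colored vertices
labelled by the elements of `S`. -/
def blockTree {I : Type} (S : Finset I) : CTree I := node (S.toList.map leaf)

/-- The colored tree `Γ_P` of a partition `P`: the root has one child for each block
`S ∈ P`, an uncolored vertex whose children are colored vertices labelled by the
elements of `S`. -/
def gammaP {I : Type} (P : Finset (Finset I)) : CTree I := node (P.toList.map blockTree)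

/-- A tree homomorphism `t → t'`, described by a map `f` on vertex positions: it sends
root to root, vertices to vertices, the two endpoints of any edge to the two endpoints
of an edge, and restricts to a label-preserving bijection between the colored
vertices. -/
def TreeHom {I : Type} (t t' : CTree I) (f : List ℕ → List ℕ) : Prop :=
  f [] = [] ∧
  (∀ p ∈ vertS t, f p ∈ vertS t') ∧
  (∀ p ∈ vertS t, p ≠ [] →
    (f p ≠ [] ∧ (f p).dropLast = f p.dropLast) ∨
    (f p.dropLast ≠ [] ∧ (f p.dropLast).dropLast = f p)) ∧
  (∀ p a, t.sub p = some (leaf a) → t'.sub (f p) = some (leaf a)) ∧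
  Set.BijOn f {p | ∃ a, t.sub p = some (leaf a)} {q | ∃ a, t'.sub q = some (leaf a)}

/-- A partition `P` of the label set is compatible with the colored tree `t` if there
exists a tree homomorphism `t → Γ_P`. -/
def Compatible {I : Type} (t : CTree I) (P : Finset (Finset I)) : Prop :=
  ∃ f, TreeHom t (gammaP P) f

/-- `C_y ⊆ I` : the labels of the colored vertices whose path from the root contains
the edge `y`. -/
def Cy {I : Type} [Fintype I] [DecidableEq I] (t : CTree I) (y : List ℕ) : Finset I :=
  Finset.univ.filter (fun a => ∃ p, t.sub p = some (leaf a) ∧ y <+: p)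

end CTree

/-!
Write `S = ⟨s(Γ), ·⟩`. On a colored tree `S` is positive on `C(Γ) \ {0}`, so the extreme rays
of `C(Γ)` correspond to the extreme points of the slice `C(Γ) ∩ {S = 1}`. The only constraints of
`C(Γ)` that involve the root coordinate are `S_i ≤ S`, where `S_i = ⟨s(Γ_i), ·⟩`; hence restricting
a vector to the principal subtrees maps the slice affinely and injectively (the root coordinate
is `1 - ∑ S_i`) onto the product of the truncated cones `C(Γ_i) ∩ {S_i ≤ 1}`. Each of these is a
pyramid with apex `0` over the slice of `C(Γ_i)`, so its extreme points are `0` and the `r_i`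
extreme points of that slice; and the extreme points of a product are the tuples of extreme
points.
-/

theorem Set.ncard_univ_pi {ι : Type*} [Fintype ι] {β : ι → Type*} (s : ∀ i, Set (β i)) :
    (Set.univ.pi s).ncard = ∏ i, (s i).ncard := by
  rw [← Nat.card_coe_set_eq, Nat.card_congr (Equiv.Set.univPi s), Nat.card_pi]
  simp only [Nat.card_coe_set_eq]

section ConvexGeometry

variable {𝕜 E F : Type*} [Ring 𝕜] [PartialOrder 𝕜] [AddCommGroup E] [Module 𝕜 E]
  [AddCommGroup F] [Module 𝕜 F]

theorem LinearMap.apply_mem_openSegment (f : E →ₗ[𝕜] F) {x x₁ x₂ : E}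
    (h : x ∈ openSegment 𝕜 x₁ x₂) : f x ∈ openSegment 𝕜 (f x₁) (f x₂) := by
  obtain ⟨a, b, ha, hb, hab, rfl⟩ := h
  exact ⟨a, b, ha, hb, hab, by simp⟩

variable [IsOrderedRing 𝕜]

theorem Set.InjOn.image_extremePoints {f : E →ᵃ[𝕜] F} {s : Set E} (hs : Convex 𝕜 s)
    (hf : s.InjOn f) : f '' s.extremePoints 𝕜 = (f '' s).extremePoints 𝕜 := by
  ext y
  constructor
  · rintro ⟨x, ⟨hxs, hx⟩, rfl⟩
    refine ⟨⟨x, hxs, rfl⟩, ?_⟩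
    rintro _ ⟨x₁, hx₁, rfl⟩ _ ⟨x₂, hx₂, rfl⟩ hy
    rw [← image_openSegment] at hy
    obtain ⟨z, hz, hzx⟩ := hy
    obtain rfl := hf (hs.openSegment_subset hx₁ hx₂ hz) hxs hzx
    rw [hx hx₁ hx₂ hz]
  · rintro ⟨⟨x, hxs, rfl⟩, hx⟩
    refine ⟨x, ⟨hxs, fun x₁ hx₁ x₂ hx₂ hx₁₂ => hf hx₁ hxs ?_⟩, rfl⟩
    refine hx ⟨x₁, hx₁, rfl⟩ ⟨x₂, hx₂, rfl⟩ ?_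
    rw [← image_openSegment]
    exact ⟨x, hx₁₂, rfl⟩

end ConvexGeometry

namespace PointedCone

variable {E : Type*} [AddCommGroup E] [Module ℝ E] {C : PointedCone ℝ E} {S : E →ₗ[ℝ] ℝ}

lemma nonneg_of_forall_pos (hS : ∀ x ∈ C, x ≠ 0 → 0 < S x) {x : E} (hx : x ∈ C) :
    0 ≤ S x := by
  rcases eq_or_ne x 0 with rfl | h
  · simp
  · exact (hS x hx h).le

theorem extremePoints_setOf_le_one (hS : ∀ x ∈ C, x ≠ 0 → 0 < S x) :
    {x ∈ C | S x ≤ 1}.extremePoints ℝ = insert 0 ({x ∈ C | S x = 1}.extremePoints ℝ) := by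
  ext x
  constructor
  · rintro ⟨⟨hxC, hx1⟩, hx⟩
    rcases eq_or_ne x 0 with rfl | hx0
    · exact Or.inl rfl
    have hpos := hS x hxC hx0
    have hx1' : S x = 1 := by
      -- otherwise `x` lies strictly between `0` and `(S x)⁻¹ • x`
      by_contra hne
      refine hx0 (hx (x₁ := 0) ⟨C.zero_mem, by simp⟩
        (x₂ := (S x)⁻¹ • x) ⟨C.smul_mem (by positivity) hxC, ?_⟩ ?_).symm
      · simp [hpos.ne']
      · refine ⟨1 - S x, S x, by grind, hpos, by ring, ?_⟩
        rw [smul_zero, zero_add, smul_inv_smul₀ hpos.ne']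
    refine Or.inr ⟨⟨hxC, hx1'⟩, fun x₁ hx₁ x₂ hx₂ h => hx ⟨hx₁.1, hx₁.2.le⟩ ⟨hx₂.1, hx₂.2.le⟩ h⟩
  · rintro (rfl | ⟨⟨hxC, hx1⟩, hx⟩)
    · refine ⟨⟨C.zero_mem, by simp⟩, fun x₁ hx₁ x₂ hx₂ h => ?_⟩
      obtain ⟨a, b, ha, hb, -, hS0⟩ := S.apply_mem_openSegment h
      have h₁ := nonneg_of_forall_pos hS hx₁.1
      have h₂ := nonneg_of_forall_pos hS hx₂.1
      by_contra hne
      have := hS x₁ hx₁.1 hne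
      simp only [map_zero, smul_eq_mul] at hS0
      nlinarith
    · refine ⟨⟨hxC, hx1.le⟩, fun x₁ hx₁ x₂ hx₂ h => ?_⟩
      obtain ⟨a, b, ha, hb, hab, hSx⟩ := S.apply_mem_openSegment h
      simp only [smul_eq_mul] at hSx
      have h₁ : S x₁ = 1 := by nlinarith [hx₁.2, hx₂.2]
      have h₂ : S x₂ = 1 := by nlinarith [hx₁.2, hx₂.2]
      exact hx ⟨hx₁.1, h₁⟩ ⟨hx₂.1, h₂⟩ h

end PointedCone

namespace CTree

variable {α : Type}

section Faces

variable {C : PointedCone ℝ (List ℕ → ℝ)} {S : (List ℕ → ℝ) →ₗ[ℝ] ℝ} {v x : List ℕ → ℝ}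

lemma mem_ray_self (v : List ℕ → ℝ) : v ∈ ray v := ⟨1, zero_le_one, (one_smul _ _).symm⟩

lemma zero_mem_ray (v : List ℕ → ℝ) : 0 ∈ ray v := ⟨0, le_rfl, (zero_smul _ _).symm⟩

lemma ray_smul {c : ℝ} (hc : 0 < c) (v : List ℕ → ℝ) : ray (c • v) = ray v := by
  ext x
  constructor
  · rintro ⟨d, hd, rfl⟩
    exact ⟨d * c, by positivity, smul_smul d c v⟩
  · rintro ⟨d, hd, rfl⟩
    exact ⟨d / c, by positivity, by rw [smul_smul, div_mul_cancel₀ _ hc.ne']⟩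

lemma mem_ray_of_smul_mem_ray {a : ℝ} (ha : 0 < a) (h : a • x ∈ ray v) : x ∈ ray v := by
  obtain ⟨c, hc, hcx⟩ := h
  exact ⟨a⁻¹ * c, by positivity, by rw [mul_smul, ← hcx, inv_smul_smul₀ ha.ne']⟩

lemma eq_of_mem_ray (hv : S v = 1) (hx : S x = 1) (h : x ∈ ray v) : x = v := by
  obtain ⟨c, -, rfl⟩ := h
  rw [map_smul, hv, smul_eq_mul, mul_one] at hx
  rw [hx, one_smul]

lemma injOn_ray : {x | S x = 1}.InjOn ray := fun x hx _ hy h =>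
  eq_of_mem_ray hy hx (h ▸ mem_ray_self x)

lemma mem_ray_of_add_mem_ray (hS : ∀ x ∈ C, x ≠ 0 → 0 < S x)
    (hv : v ∈ {x ∈ C | S x = 1}.extremePoints ℝ) {x y : List ℕ → ℝ} (hx : x ∈ C) (hy : y ∈ C)
    (hxy : x + y ∈ ray v) : x ∈ ray v := by
  obtain ⟨c, hc, hxyc⟩ := hxy
  rcases eq_or_ne x 0 with rfl | hx0
  · exact zero_mem_ray v
  rcases eq_or_ne y 0 with rfl | hy0
  · exact ⟨c, hc, by rw [← hxyc, add_zero]⟩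
  have hSx := hS x hx hx0
  have hSy := hS y hy hy0
  have hSc : S x + S y = c := by
    simpa [hv.1.2] using congrArg S hxyc
  have hcpos : 0 < c := hSc ▸ add_pos hSx hSy
  have hslice : ∀ z ∈ C, 0 < S z → (S z)⁻¹ • z ∈ {x ∈ C | S x = 1} := fun z hz hSz =>
    ⟨C.smul_mem (inv_nonneg.2 hSz.le) hz, by simp [hSz.ne']⟩
  have hseg : v ∈ openSegment ℝ ((S x)⁻¹ • x) ((S y)⁻¹ • y) := by
    refine ⟨S x / c, S y / c, by positivity, by positivity, by field_simp; exact hSc, ?_⟩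
    have hcoef : ∀ s : ℝ, s ≠ 0 → s / c * s⁻¹ = c⁻¹ := fun s hs => by field_simp
    rw [smul_smul, smul_smul, hcoef _ hSx.ne', hcoef _ hSy.ne', ← smul_add, hxyc, smul_smul,
      inv_mul_cancel₀ hcpos.ne', one_smul]
  have hxv := hv.2 (hslice x hx hSx) (hslice y hy hSy) hseg
  exact mem_ray_of_smul_mem_ray (inv_pos.2 hSx) (hxv ▸ mem_ray_self v)

theorem setOf_isOneDimFace_eq (hS : ∀ x ∈ C, x ≠ 0 → 0 < S x) :
    {F | IsOneDimFace C F} = ray '' {x ∈ C | S x = 1}.extremePoints ℝ := by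
  ext F
  constructor
  · rintro ⟨hFC, ⟨u, hu0, rfl⟩, hext⟩
    have huC : u ∈ C := hFC (mem_ray_self u)
    have hSu := hS u huC hu0
    refine ⟨(S u)⁻¹ • u, ⟨⟨C.smul_mem (inv_nonneg.2 hSu.le) huC, by simp [hSu.ne']⟩,
      fun x₁ hx₁ x₂ hx₂ h => ?_⟩, ray_smul (inv_pos.2 hSu) u⟩
    obtain ⟨a, b, ha, hb, -, hab⟩ := h
    have hmem : a • x₁ + b • x₂ ∈ ray u := by
      rw [hab, ← ray_smul (inv_pos.2 hSu) u]
      exact mem_ray_self _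
    have hx₁ray := mem_ray_of_smul_mem_ray ha
      (hext _ (C.smul_mem ha.le hx₁.1) _ (C.smul_mem hb.le hx₂.1) hmem).1
    rw [← ray_smul (inv_pos.2 hSu) u] at hx₁ray
    exact eq_of_mem_ray (by simp [hSu.ne']) hx₁.2 hx₁ray
  · rintro ⟨v, hv, rfl⟩
    refine ⟨fun _ ⟨c, hc, hcv⟩ => hcv ▸ C.smul_mem hc hv.1.1,
      ⟨v, fun h => by simpa [h] using hv.1.2, rfl⟩, fun x hx y hy hxy => ?_⟩
    exact ⟨mem_ray_of_add_mem_ray hS hv hx hy hxy,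
      mem_ray_of_add_mem_ray hS hv hy hx (add_comm x y ▸ hxy)⟩

theorem ncard_setOf_isOneDimFace (hS : ∀ x ∈ C, x ≠ 0 → 0 < S x) :
    {F | IsOneDimFace C F}.ncard = ({x ∈ C | S x = 1}.extremePoints ℝ).ncard := by
  rw [setOf_isOneDimFace_eq hS, (injOn_ray.mono fun x hx => hx.1.2).ncard_image]

end Faces

section Positions

lemma mem_allLists {m k : ℕ} {p : List ℕ} :
    p ∈ allLists m k ↔ p.length ≤ k ∧ ∀ x ∈ p, x < m := by
  induction k generalizing p with
  | zero => cases p <;> simp [allLists]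
  | succ k ih =>
    cases p with
    | nil => simp [allLists]
    | cons a q => simp [allLists, ih, and_left_comm]

lemma length_le_sizeOf (l : List (CTree α)) : l.length ≤ sizeOf l := by
  induction l with
  | nil => simp
  | cons a l ih => simp only [List.length_cons, List.cons.sizeOf_spec]; omega

lemma sub_nil (t : CTree α) : t.sub [] = some t := by cases t <;> rfl

lemma sub_node_cons {ts : List (CTree α)} {i : ℕ} (hi : i < ts.length) (q : List ℕ) :
    (node ts).sub (i :: q) = ts[i].sub q := by
  simp [sub, hi]

lemma sub_node_cons_of_le {ts : List (CTree α)} {i : ℕ} (hi : ts.length ≤ i) (q : List ℕ) :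
    (node ts).sub (i :: q) = none := by
  simp [sub, List.getElem?_eq_none hi]

lemma mem_allLists_of_isSome_sub :
    ∀ {t : CTree α} {p : List ℕ}, (t.sub p).isSome → p ∈ allLists (sizeOf t) (sizeOf t)
  | _, [], _ => mem_allLists.2 ⟨Nat.zero_le _, by simp⟩
  | leaf _, _ :: _, h => by simp [sub] at h
  | node ts, i :: q, h => by
    rcases lt_or_ge i ts.length with hi | hi
    · rw [sub_node_cons hi] at h
      obtain ⟨hlen, hlt⟩ := mem_allLists.1 (mem_allLists_of_isSome_sub h)
      have hsz : sizeOf ts[i] < sizeOf ts := List.sizeOf_lt_of_mem (List.getElem_mem hi)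
      have hlen' := length_le_sizeOf ts
      simp only [node.sizeOf_spec]
      refine mem_allLists.2 ⟨by simp; omega, fun x hx => ?_⟩
      rcases List.mem_cons.1 hx with rfl | hx
      · omega
      · have := hlt x hx; omega
    · simp [sub_node_cons_of_le hi] at h

lemma mem_vertS {t : CTree α} {p : List ℕ} : p ∈ vertS t ↔ (t.sub p).isSome := by
  simpa [vertS] using mem_allLists_of_isSome_sub

lemma mem_uncS {t : CTree α} {p : List ℕ} : p ∈ uncS t ↔ ∃ us, t.sub p = some (node us) := by
  simp only [uncS, Finset.mem_filter, List.mem_toFinset, and_iff_right_iff_imp]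
  rintro ⟨us, hus⟩
  exact mem_allLists_of_isSome_sub (by simp [hus])

lemma mem_vertS_iff_eq_nil_or_mem_edgeS {t : CTree α} {p : List ℕ} :
    p ∈ vertS t ↔ p = [] ∨ p ∈ edgeS t := by
  rcases eq_or_ne p [] with rfl | hp
  · simp [mem_vertS, sub_nil]
  · simp [edgeS, hp]

lemma uncS_leaf (a : α) : uncS (leaf a) = ∅ := by
  ext p
  cases p <;> simp [mem_uncS, sub]

lemma nil_mem_uncS_node (ts : List (CTree α)) : [] ∈ uncS (node ts) :=
  mem_uncS.2 ⟨ts, sub_nil _⟩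

lemma cons_mem_uncS_node {ts : List (CTree α)} {i : ℕ} {q : List ℕ} :
    i :: q ∈ uncS (node ts) ↔ ∃ h : i < ts.length, q ∈ uncS ts[i] := by
  rcases lt_or_ge i ts.length with hi | hi
  · simp [mem_uncS, sub_node_cons hi, hi]
  · simp [mem_uncS, sub_node_cons_of_le hi, hi.not_gt]

lemma cons_mem_edgeS_node {ts : List (CTree α)} {i : ℕ} {e : List ℕ} :
    i :: e ∈ edgeS (node ts) ↔ ∃ h : i < ts.length, e = [] ∨ e ∈ edgeS ts[i] := by
  rw [edgeS, Finset.mem_erase, and_iff_right (List.cons_ne_nil i e), mem_vertS]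
  rcases lt_or_ge i ts.length with hi | hi
  · rw [sub_node_cons hi, ← mem_vertS, mem_vertS_iff_eq_nil_or_mem_edgeS]
    simp [hi]
  · simp [sub_node_cons_of_le hi, hi.not_gt]

lemma sub_getElem_ne_node_nil {ts : List (CTree α)} (h : ∀ p, (node ts).sub p ≠ some (node []))
    (i : Fin ts.length) (p : List ℕ) : ts[i].sub p ≠ some (node []) := by
  simpa [sub_node_cons i.2] using h (i :: p)

end Positions

section Cone

/-- `⟨s_v, x⟩` in the paper's notation. -/
def subtreeSum (t : CTree α) (v : List ℕ) : (List ℕ → ℝ) →ₗ[ℝ] ℝ :=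
  ∑ p ∈ (uncS t).filter (v <+: ·), LinearMap.proj p

lemma subtreeSum_apply (t : CTree α) (v : List ℕ) (x : List ℕ → ℝ) :
    subtreeSum t v x = ∑ p ∈ (uncS t).filter (v <+: ·), x p := by
  simp [subtreeSum]

def childCoords (i : ℕ) : (List ℕ → ℝ) →ₗ[ℝ] List ℕ → ℝ :=
  LinearMap.funLeft ℝ ℝ (List.cons i)

lemma childCoords_apply (i : ℕ) (x : List ℕ → ℝ) (q : List ℕ) :
    childCoords i x q = x (i :: q) := rfl

lemma pairR_wt (t : CTree α) (d : List ℕ) (x : List ℕ → ℝ) :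
    pairR t (wt t d) x = subtreeSum t d.dropLast x - subtreeSum t d x := by
  have hpre : ∀ p, d <+: p → d.dropLast <+: p := fun p => (List.dropLast_prefix d).trans
  rw [pairR, subtreeSum_apply, subtreeSum_apply, Finset.sum_filter, Finset.sum_filter,
    ← Finset.sum_sub_distrib]
  refine Finset.sum_congr rfl fun p hp => ?_
  by_cases h₂ : d <+: p
  · simp [wt, hp, h₂, hpre p h₂]
  · by_cases h₁ : d.dropLast <+: p <;> simp [wt, hp, h₁, h₂]

lemma mem_dualCone_iff {t : CTree α} {x : List ℕ → ℝ} :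
    x ∈ dualCone t ↔ (∀ p ∉ uncS t, x p = 0) ∧
      ∀ d ∈ edgeS t, subtreeSum t d x ≤ subtreeSum t d.dropLast x := by
  simp [dualCone, pairR_wt]

def dualPointedCone (t : CTree α) : PointedCone ℝ (List ℕ → ℝ) where
  carrier := dualCone t
  add_mem' {x y} hx hy := by
    rw [mem_dualCone_iff] at *
    exact ⟨fun p hp => by simp [hx.1 p hp, hy.1 p hp],
      fun d hd => by simpa using add_le_add (hx.2 d hd) (hy.2 d hd)⟩
  zero_mem' := by simp [mem_dualCone_iff]
  smul_mem' c x hx := by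
    rw [← Nonneg.coe_smul, mem_dualCone_iff]
    rw [mem_dualCone_iff] at hx
    refine ⟨fun p hp => by rw [Pi.smul_apply, hx.1 p hp, smul_zero], fun d hd => ?_⟩
    rw [map_smul, map_smul, smul_eq_mul, smul_eq_mul]
    exact mul_le_mul_of_nonneg_left (hx.2 d hd) c.2

lemma eq_zero_of_mem_dualCone_leaf {a : α} {x : List ℕ → ℝ} (hx : x ∈ dualCone (leaf a)) :
    x = 0 :=
  funext fun p => hx.1 p (by simp [uncS_leaf])

lemma subtreeSum_node_cons {ts : List (CTree α)} {i : ℕ} (hi : i < ts.length) (v : List ℕ)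
    (x : List ℕ → ℝ) :
    subtreeSum (node ts) (i :: v) x = subtreeSum ts[i] v (childCoords i x) := by
  have hfilter : (uncS (node ts)).filter ((i :: v) <+: ·)
      = ((uncS ts[i]).filter (v <+: ·)).map ⟨List.cons i, List.cons_injective⟩ := by
    ext p
    rcases p with _ | ⟨j, q⟩
    · simp
    · simp only [Finset.mem_filter, cons_mem_uncS_node, List.cons_prefix_cons, Finset.mem_map,
        Function.Embedding.coeFn_mk, List.cons.injEq]
      constructor
      · rintro ⟨⟨_, hq⟩, rfl, hv⟩
        exact ⟨q, ⟨hq, hv⟩, rfl, rfl⟩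
      · rintro ⟨q, ⟨hq, hv⟩, rfl, rfl⟩
        exact ⟨⟨hi, hq⟩, rfl, hv⟩
  rw [subtreeSum_apply, subtreeSum_apply, hfilter, Finset.sum_map]
  rfl

lemma subtreeSum_node_nil (ts : List (CTree α)) (x : List ℕ → ℝ) :
    subtreeSum (node ts) [] x
      = x [] + ∑ i : Fin ts.length, subtreeSum ts[i] [] (childCoords i x) := by
  have huncS : uncS (node ts) = insert []
      (Finset.univ.biUnion fun i : Fin ts.length => (uncS (node ts)).filter ([i.1] <+: ·)) := by
    ext p
    rcases p with _ | ⟨j, q⟩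
    · simp [nil_mem_uncS_node]
    · simp only [Finset.mem_insert, reduceCtorEq, false_or, Finset.mem_biUnion,
        Finset.mem_univ, true_and, Finset.mem_filter, List.cons_prefix_cons, List.nil_prefix,
        and_true]
      constructor
      · intro hp
        obtain ⟨hj, -⟩ := cons_mem_uncS_node.1 hp
        exact ⟨⟨j, hj⟩, hp, rfl⟩
      · rintro ⟨i, hp, -⟩
        exact hp
  have hdisj : ((Finset.univ : Finset (Fin ts.length)) : Set (Fin ts.length)).PairwiseDisjoint
      fun i => (uncS (node ts)).filter ([i.1] <+: ·) := by
    intro i _ j _ hij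
    refine Finset.disjoint_filter.2 fun p _ hi hj => hij (Fin.ext ?_)
    obtain ⟨r, rfl⟩ := hi
    exact (List.cons_prefix_cons.1 hj).1.symm
  rw [subtreeSum_apply, Finset.filter_true_of_mem fun p _ => List.nil_prefix, huncS,
    Finset.sum_insert (by simp), Finset.sum_biUnion hdisj]
  congr 1
  refine Finset.sum_congr rfl fun i _ => ?_
  rw [Fin.getElem_fin, ← subtreeSum_node_cons i.2, subtreeSum_apply]

theorem mem_dualCone_node {ts : List (CTree α)} {x : List ℕ → ℝ} :
    x ∈ dualCone (node ts) ↔ (∀ p ∉ uncS (node ts), x p = 0) ∧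
      ∀ i : Fin ts.length, childCoords i x ∈ dualCone ts[i] ∧
        subtreeSum ts[i] [] (childCoords i x) ≤ subtreeSum (node ts) [] x := by
  rw [mem_dualCone_iff]
  refine and_congr_right fun hsupp => ⟨fun h i => ⟨mem_dualCone_iff.2 ⟨?_, ?_⟩, ?_⟩, ?_⟩
  · exact fun q hq => hsupp _ fun h' => hq (cons_mem_uncS_node.1 h').2
  · intro e he
    have := h (i :: e) (cons_mem_edgeS_node.2 ⟨i.2, Or.inr he⟩)
    rwa [List.dropLast_cons_of_ne_nil (Finset.ne_of_mem_erase he), subtreeSum_node_cons i.2,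
      subtreeSum_node_cons i.2] at this
  · simpa [subtreeSum_node_cons i.2] using h [i] (cons_mem_edgeS_node.2 ⟨i.2, Or.inl rfl⟩)
  · rintro h (_ | ⟨j, e⟩) hd
    · simp [edgeS] at hd
    obtain ⟨hj, rfl | he⟩ := cons_mem_edgeS_node.1 hd
    · simpa [subtreeSum_node_cons hj] using (h ⟨j, hj⟩).2
    · rw [List.dropLast_cons_of_ne_nil (Finset.ne_of_mem_erase he), subtreeSum_node_cons hj,
        subtreeSum_node_cons hj]
      exact (mem_dualCone_iff.1 (h ⟨j, hj⟩).1).2 e he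

end Cone

section Slice

def glue (ts : List (CTree α)) (c : ℝ) (y : Fin ts.length → List ℕ → ℝ) : List ℕ → ℝ
  | [] => c
  | i :: q => if h : i < ts.length then y ⟨i, h⟩ q else 0

lemma childCoords_glue (ts : List (CTree α)) (c : ℝ) (y : Fin ts.length → List ℕ → ℝ)
    (i : Fin ts.length) : childCoords i (glue ts c y) = y i := by
  ext q
  simp [childCoords_apply, glue, i.2]

lemma glue_eq_zero_of_notMem {ts : List (CTree α)} {c : ℝ} {y : Fin ts.length → List ℕ → ℝ}
    (hy : ∀ i, y i ∈ dualCone ts[i]) {p : List ℕ} (hp : p ∉ uncS (node ts)) :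
    glue ts c y p = 0 := by
  rcases p with _ | ⟨j, q⟩
  · exact absurd (nil_mem_uncS_node ts) hp
  · by_cases hj : j < ts.length
    · rw [glue, dif_pos hj]
      exact (hy ⟨j, hj⟩).1 q fun hq => hp (cons_mem_uncS_node.2 ⟨hj, hq⟩)
    · rw [glue, dif_neg hj]

lemma eq_glue {ts : List (CTree α)} {x : List ℕ → ℝ} (hx : ∀ p ∉ uncS (node ts), x p = 0) :
    x = glue ts (x []) fun i => childCoords i x := by
  funext p
  rcases p with _ | ⟨j, q⟩
  · rfl
  · by_cases hj : j < ts.length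
    · simp [glue, hj, childCoords_apply]
    · rw [glue, dif_neg hj]
      exact hx _ fun h => hj (cons_mem_uncS_node.1 h).1

def splitChildren (ts : List (CTree α)) :
    (List ℕ → ℝ) →ₗ[ℝ] Fin ts.length → List ℕ → ℝ :=
  LinearMap.pi fun i => childCoords i

def slice (t : CTree α) : Set (List ℕ → ℝ) :=
  {x ∈ dualPointedCone t | subtreeSum t [] x = 1}

lemma convex_slice (t : CTree α) : Convex ℝ (slice t) :=
  (dualPointedCone t).convex.inter (convex_hyperplane (subtreeSum t []).isLinear 1)

lemma slice_leaf (a : α) : slice (leaf a) = ∅ :=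
  Set.eq_empty_of_forall_notMem fun x ⟨hx, hx1⟩ => by
    simp [eq_zero_of_mem_dualCone_leaf hx] at hx1

lemma zero_notMem_slice (t : CTree α) : 0 ∉ slice t := fun h => by simpa using h.2

theorem image_splitChildren_slice (ts : List (CTree α)) :
    splitChildren ts '' slice (node ts)
      = Set.univ.pi fun i => {y ∈ dualPointedCone ts[i] | subtreeSum ts[i] [] y ≤ 1} := by
  ext y
  constructor
  · rintro ⟨x, ⟨hx, hx1⟩, rfl⟩ i -
    obtain ⟨hxi, hle⟩ := (mem_dualCone_node.1 hx).2 i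
    exact ⟨hxi, hx1 ▸ hle⟩
  · intro hy
    simp only [Set.mem_pi, Set.mem_univ, true_implies] at hy
    refine ⟨glue ts (1 - ∑ i, subtreeSum ts[i] [] (y i)) y, ⟨?_, ?_⟩, ?_⟩
    · refine mem_dualCone_node.2 ⟨fun p hp => glue_eq_zero_of_notMem (fun i => (hy i).1) hp,
        fun i => ?_⟩
      simp only [childCoords_glue, subtreeSum_node_nil]
      exact ⟨(hy i).1, by simpa [glue] using (hy i).2⟩
    · simp [subtreeSum_node_nil, childCoords_glue, glue]
    · ext1 i
      simp [splitChildren, childCoords_glue]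

theorem injOn_splitChildren_slice (ts : List (CTree α)) :
    (slice (node ts)).InjOn (splitChildren ts) := by
  intro x ⟨hx, hx1⟩ x' ⟨hx', hx1'⟩ h
  have hchild : ∀ i : Fin ts.length, childCoords i x = childCoords i x' := congrFun h
  rw [subtreeSum_node_nil] at hx1 hx1'
  simp only [hchild] at hx1
  rw [eq_glue (mem_dualCone_iff.1 hx).1, eq_glue (mem_dualCone_iff.1 hx').1]
  simp only [hchild]
  congr 1
  linarith

theorem subtreeSum_pos : ∀ (t : CTree α), (∀ p, t.sub p ≠ some (node [])) →
    ∀ x ∈ dualCone t, x ≠ 0 → 0 < subtreeSum t [] x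
  | leaf _, _, _, hx, hx0 => absurd (eq_zero_of_mem_dualCone_leaf hx) hx0
  | node ts, h, x, hx, hx0 => by
    have hchild : ∀ i : Fin ts.length, ∀ y ∈ dualCone ts[i], y ≠ 0 →
        0 < subtreeSum ts[i] [] y := fun i =>
      subtreeSum_pos ts[i] (sub_getElem_ne_node_nil h i)
    obtain ⟨hsupp, hx⟩ := mem_dualCone_node.1 hx
    have hnonneg (i : Fin ts.length) : 0 ≤ subtreeSum ts[i] [] (childCoords i x) :=
      PointedCone.nonneg_of_forall_pos (C := dualPointedCone ts[i]) (hchild i) (hx i).1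
    have hne : ts ≠ [] := fun hts => h [] (by rw [sub_nil, hts])
    obtain ⟨i₀⟩ : Nonempty (Fin ts.length) := ⟨⟨0, List.length_pos_iff.2 hne⟩⟩
    refine lt_of_le_of_ne ((hnonneg i₀).trans (hx i₀).2) fun h0 => hx0 ?_
    have hzero : ∀ i : Fin ts.length, childCoords i x = 0 := fun i => by
      by_contra hi
      exact (hchild i _ (hx i).1 hi).not_ge (h0 ▸ (hx i).2)
    have hroot : x [] = 0 := by
      have := subtreeSum_node_nil ts x
      simp only [hzero, map_zero, Finset.sum_const_zero, add_zero] at this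
      linarith
    rw [eq_glue hsupp, hroot]
    simp only [hzero]
    funext p
    rcases p with _ | ⟨j, q⟩ <;> simp [glue]
  termination_by t => sizeOf t
  decreasing_by
    have := List.sizeOf_lt_of_mem (List.getElem_mem i.2)
    simp only [node.sizeOf_spec, Fin.getElem_fin]
    omega

end Slice

section Count

theorem image_extremePoints_slice_node {ts : List (CTree α)}
    (h : ∀ p, (node ts).sub p ≠ some (node [])) :
    splitChildren ts '' (slice (node ts)).extremePoints ℝ
      = Set.univ.pi fun i => insert (0 : List ℕ → ℝ) ((slice ts[i]).extremePoints ℝ) := by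
  have himage := (injOn_splitChildren_slice ts).image_extremePoints
    (f := (splitChildren ts).toAffineMap) (convex_slice _)
  rw [LinearMap.coe_toAffineMap] at himage
  rw [himage, image_splitChildren_slice, extremePoints_pi]
  congr 1
  funext i
  exact PointedCone.extremePoints_setOf_le_one (C := dualPointedCone ts[i])
    (subtreeSum_pos ts[i] (sub_getElem_ne_node_nil h i))

theorem finite_extremePoints_slice : ∀ t : CTree α, (∀ p, t.sub p ≠ some (node [])) →
    ((slice t).extremePoints ℝ).Finite
  | leaf a, _ => by simp [slice_leaf]
  | node ts, h => by
    refine Set.Finite.of_finite_image ?_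
      ((injOn_splitChildren_slice ts).mono extremePoints_subset)
    rw [image_extremePoints_slice_node h]
    exact Set.Finite.pi fun i => (finite_extremePoints_slice ts[i] (sub_getElem_ne_node_nil h i)).insert 0
  termination_by t => sizeOf t
  decreasing_by
    have := List.sizeOf_lt_of_mem (List.getElem_mem i.2)
    simp only [node.sizeOf_spec, Fin.getElem_fin]
    omega

theorem ncard_extremePoints_slice_node {ts : List (CTree α)}
    (h : ∀ p, (node ts).sub p ≠ some (node [])) :
    ((slice (node ts)).extremePoints ℝ).ncard
      = ∏ i : Fin ts.length, (((slice ts[i]).extremePoints ℝ).ncard + 1) := by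
  rw [← ((injOn_splitChildren_slice ts).mono extremePoints_subset).ncard_image,
    image_extremePoints_slice_node h, Set.ncard_univ_pi]
  refine Finset.prod_congr rfl fun i _ => ?_
  exact Set.ncard_insert_of_notMem (fun h0 => zero_notMem_slice _ h0.1)
    (finite_extremePoints_slice _ (sub_getElem_ne_node_nil h i))

theorem ncard_setOf_isOneDimFace_dualCone {t : CTree α} (h : ∀ p, t.sub p ≠ some (node [])) :
    {F | IsOneDimFace (dualCone t) F}.ncard = ((slice t).extremePoints ℝ).ncard :=
  ncard_setOf_isOneDimFace (C := dualPointedCone t) (subtreeSum_pos t h)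

lemma ncard_setOf_isOneDimFace_leaf (a : α) :
    {F | IsOneDimFace (dualCone (leaf a)) F}.ncard = 0 := by
  rw [ncard_setOf_isOneDimFace_dualCone fun p => by cases p <;> simp [sub], slice_leaf]
  simp

end Count

end CTree

/-- If `Γ` has principal subtrees `Γ₁, …, Γ_m` and `r_i` denotes the
number of one-dimensional faces of `C(Γ_i)` (with `r_i = 0` when `Γ_i` is trivial),
then the number of one-dimensional faces of `C(Γ)` is `(r₁ + 1) ⋯ (r_m + 1)`. -/
theorem ncard_oneDimFaces_eq_prod {α : Type} (ts : List (CTree α))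
    (h : (CTree.node ts).IsColoredTree) :
    Set.ncard {F | CTree.IsOneDimFace (CTree.dualCone (CTree.node ts)) F} =
      (ts.map (fun c =>
        (match c with
          | CTree.leaf _ => 0
          | CTree.node cs =>
              Set.ncard {F | CTree.IsOneDimFace (CTree.dualCone (CTree.node cs)) F})
        + 1)).prod := by
  open CTree in
  rw [ncard_setOf_isOneDimFace_dualCone h.1, ncard_extremePoints_slice_node h.1,
    ← Fin.prod_univ_fun_getElem]
  refine Finset.prod_congr rfl fun i _ => ?_
  rw [← ncard_setOf_isOneDimFace_dualCone (sub_getElem_ne_node_nil h.1 i), Fin.getElem_fin]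
  generalize ts[i.1] = c
  cases c with
  | leaf a => simp [ncard_setOf_isOneDimFace_leaf]
  | node cs => rfl
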